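/- arXiv:2212.05430 — 7 statements merged into one kernel-verified Lean document; each statement's English description precedes it below -/
import Mathlib

section
/- Fix w* ∈ ℝ^d, β_max > 0, β₁ > 0, ξ > 1, and for every β ∈ (0, β_max] fix constants λ_β > 0, Λ_β ≥ 0 satisfying 2Λ_β/λ_β ≤ 1/√(ξβ). Suppose for each β ∈ (0, β_max] and each u ∈ B₂(w*, 1/√β) there is a twice continuously differentiable function Q_β(·|u) : ℝ^d → ℝ with ∇²Q_β(·|u)(v) ⪰ λ_β·I for all v ∈ B₂(w*, 1/√β) and ‖∇Q_β(·|u)(w*)‖₂ ≤ Λ_β. Let sequences (ŵ^t) and (β_t) satisfy: β_{t+1} = ξ·β_t, β₁·‖ŵ¹ − w*‖₂² ≤ 1, and for every t with β_t ≤ β_max, ŵ^{t+1} ∈ B₂(w*, 1/√β_t) and Q_{β_t}(ŵ^{t+1}|ŵ^t) ≤ Q_{β_t}(w*|ŵ^t). Then for every t with β_t ≤ β_max one has β_t·‖ŵ^t − w*‖₂² ≤ 1; consequently, for any ε > 1/β_max, ‖ŵ^T − w*‖₂² ≤ ε whenever T ≥ 1 + log(1/(ε·β₁))/log ξ and β_T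 ≤ β_max. -/
open Set Metric
open scoped RealInnerProductSpace

/-!
Strong convexity of `Q_β(·|u)` on the ball `B(w*, 1/√β)`, integrated along the segment from `w*`
to the next iterate `ŵ`, gives `λ/2 ‖ŵ - w*‖² ≤ Q(ŵ) - Q(w*) - ⟪∇Q(w*), ŵ - w*⟫ ≤ Λ ‖ŵ - w*‖`,
hence `‖ŵ - w*‖ ≤ 2Λ/λ ≤ 1/√(ξβ)`: the invariant `β_t ‖ŵ^t - w*‖² ≤ 1` survives the update
`β ↦ ξβ`. As `β_T = ξ^T β₁` grows geometrically, the bound on `T` forces `1/β_T ≤ ε`.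
-/

lemma add_deriv_add_half_le_of_le_deriv2 {g g' g'' : ℝ → ℝ} {m : ℝ}
    (hg : ∀ t, HasDerivAt g (g' t) t) (hg' : ∀ t, HasDerivAt g' (g'' t) t)
    (hm : ∀ t ∈ Ioo (0 : ℝ) 1, m ≤ g'' t) :
    g 0 + g' 0 + m / 2 ≤ g 1 := by
  set h : ℝ → ℝ := fun t => g t - m / 2 * t ^ 2
  have hh : ∀ t, HasDerivAt h (g' t - m * t) t := fun t =>
    ((hg t).sub ((hasDerivAt_pow 2 t).const_mul (m / 2))).congr_deriv (by ring)
  have hh' : ∀ t, HasDerivAt (fun t => g' t - m * t) (g'' t - m) t := fun t =>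
    ((hg' t).sub ((hasDerivAt_id t).const_mul m)).congr_deriv (by simp)
  have hconvex : ConvexOn ℝ (Icc 0 1) h :=
    convexOn_of_hasDerivWithinAt2_nonneg (convex_Icc 0 1)
      (fun t _ => (hh t).continuousAt.continuousWithinAt)
      (fun t _ => (hh t).hasDerivWithinAt) (fun t _ => (hh' t).hasDerivWithinAt)
      (fun t ht => by rw [interior_Icc] at ht; linarith [hm t ht])
  have hslope := hconvex.le_slope_of_hasDerivAt (left_mem_Icc.2 zero_le_one)
    (right_mem_Icc.2 zero_le_one) zero_lt_one (hh 0)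
  simp only [slope_def_field, h] at hslope
  linarith

lemma mem_closedBall_one_div_sqrt_iff {E : Type*} [NormedAddCommGroup E] {β : ℝ} (hβ : 0 < β)
    {x c : E} :
    x ∈ closedBall c (1 / Real.sqrt β) ↔ β * ‖x - c‖ ^ 2 ≤ 1 := by
  rw [mem_closedBall, dist_eq_norm, ← pow_le_pow_iff_left₀ (norm_nonneg _) (by positivity)
    two_ne_zero, div_pow, one_pow, Real.sq_sqrt hβ.le, ← le_div_iff₀' hβ]

variable {E : Type*} [NormedAddCommGroup E] [InnerProductSpace ℝ E] [CompleteSpace E]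

lemma ContDiff.add_inner_gradient_add_le_of_le_iteratedFDeriv_two {f : E → ℝ}
    (hf : ContDiff ℝ 2 f) {m : ℝ} {s : Set E} (hs : Convex ℝ s) {a b : E} (ha : a ∈ s)
    (hb : b ∈ s) (hm : ∀ v ∈ s, m * ‖b - a‖ ^ 2 ≤ iteratedFDeriv ℝ 2 f v ![b - a, b - a]) :
    f a + ⟪gradient f a, b - a⟫ + m / 2 * ‖b - a‖ ^ 2 ≤ f b := by
  set z := b - a
  set c : ℝ → E := fun t => a + t • z
  have hc : ∀ t, HasDerivAt c z t := fun t =>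
    (((hasDerivAt_id t).smul_const z).const_add a).congr_deriv (one_smul ℝ z)
  have hf' : ContDiff ℝ 1 (fderiv ℝ f) := hf.fderiv_right le_rfl
  have hfc : ∀ t, HasDerivAt (f ∘ c) (fderiv ℝ f (c t) z) t := fun t =>
    ((hf.differentiable two_ne_zero) (c t)).hasFDerivAt.comp_hasDerivAt t (hc t)
  have hfc' : ∀ t, HasDerivAt (fun t => fderiv ℝ f (c t) z)
      (fderiv ℝ (fderiv ℝ f) (c t) z z) t := fun t =>
    ((ContinuousLinearMap.apply ℝ ℝ z).hasFDerivAt.comp _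
      ((hf'.differentiable one_ne_zero) (c t)).hasFDerivAt).comp_hasDerivAt t (hc t)
  have key := add_deriv_add_half_le_of_le_deriv2 hfc hfc' (m := m * ‖z‖ ^ 2) fun t ht => by
    have := hm (c t) (hs.add_smul_sub_mem ha hb (Ioo_subset_Icc_self ht))
    rwa [iteratedFDeriv_two_apply] at this
  have hgrad : fderiv ℝ f a z = ⟪gradient f a, z⟫ := by
    rw [((hf.differentiable two_ne_zero) a).hasGradientAt.hasFDerivAt.fderiv,
      InnerProductSpace.toDual_apply_apply]
  simp only [Function.comp, c, zero_smul, add_zero, one_smul, z, add_sub_cancel, hgrad] at key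
  linarith

lemma ContDiff.norm_sub_le_of_le_iteratedFDeriv_two {f : E → ℝ}
    (hf : ContDiff ℝ 2 f) {m : ℝ} (hm : 0 < m) {s : Set E} (hs : Convex ℝ s) {c x : E}
    (hc : c ∈ s) (hx : x ∈ s) (hhess : ∀ v ∈ s, ∀ z, m * ‖z‖ ^ 2 ≤ iteratedFDeriv ℝ 2 f v ![z, z])
    (hfx : f x ≤ f c) :
    ‖x - c‖ ≤ 2 * ‖gradient f c‖ / m := by
  have hquad := hf.add_inner_gradient_add_le_of_le_iteratedFDeriv_two hs hc hx
    fun v hv => hhess v hv (x - c)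
  have hinner : -(‖gradient f c‖ * ‖x - c‖) ≤ ⟪gradient f c, x - c⟫ :=
    neg_le_of_abs_le (abs_real_inner_le_norm _ _)
  rw [le_div_iff₀ hm]
  rcases (norm_nonneg (x - c)).eq_or_lt with h | h
  · rw [← h, zero_mul]; positivity
  · nlinarith

lemma one_le_mul_pow_of_log_div_log_le {ξ a : ℝ} (hξ : 1 < ξ) (ha : 0 < a) {T : ℕ}
    (hT : 1 + Real.log (1 / a) / Real.log ξ ≤ T) :
    1 ≤ a * ξ ^ T := by
  have hlogξ : 0 < Real.log ξ := Real.log_pos hξ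
  have hlog : Real.log (1 / a) ≤ Real.log (ξ ^ T) := by
    rw [Real.log_pow]
    have := (div_le_iff₀ hlogξ).1 (show Real.log (1 / a) / Real.log ξ ≤ T - 1 by linarith)
    nlinarith
  rw [Real.log_le_log_iff (by positivity) (by positivity), div_le_iff₀ ha] at hlog
  linarith

theorem stmt1_general
    {d : ℕ} (wstar : EuclideanSpace ℝ (Fin d))
    (βmax : ℝ)
    (ξ : ℝ) (hξ : 1 < ξ)
    (lam Lam : ℝ → ℝ)
    (hlam : ∀ β ∈ Ioc (0:ℝ) βmax, 0 < lam β)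
    (hratio : ∀ β ∈ Ioc (0:ℝ) βmax, 2 * Lam β / lam β ≤ 1 / Real.sqrt (ξ * β))
    (Q : ℝ → EuclideanSpace ℝ (Fin d) → EuclideanSpace ℝ (Fin d) → ℝ)
    (hQsmooth : ∀ β ∈ Ioc (0:ℝ) βmax, ∀ u ∈ closedBall wstar (1 / Real.sqrt β),
      ContDiff ℝ 2 (Q β u))
    (hLWSC : ∀ β ∈ Ioc (0:ℝ) βmax, ∀ u ∈ closedBall wstar (1 / Real.sqrt β),
      ∀ v ∈ closedBall wstar (1 / Real.sqrt β),
      ∀ z : EuclideanSpace ℝ (Fin d),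
        lam β * ‖z‖ ^ 2 ≤ iteratedFDeriv ℝ 2 (Q β u) v ![z, z])
    (hLWLC : ∀ β ∈ Ioc (0:ℝ) βmax, ∀ u ∈ closedBall wstar (1 / Real.sqrt β),
      ‖gradient (Q β u) wstar‖ ≤ Lam β)
    (w : ℕ → EuclideanSpace ℝ (Fin d)) (β : ℕ → ℝ)
    (hβ0 : 0 < β 0)
    (hβrec : ∀ t, β (t + 1) = ξ * β t)
    (hinit : β 0 * ‖w 0 - wstar‖ ^ 2 ≤ 1)
    (hstep : ∀ t, β t ≤ βmax →
      w (t + 1) ∈ closedBall wstar (1 / Real.sqrt (β t)) ∧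
      Q (β t) (w t) (w (t + 1)) ≤ Q (β t) (w t) wstar) :
    (∀ t, β t ≤ βmax → β t * ‖w t - wstar‖ ^ 2 ≤ 1) ∧
    (∀ ε : ℝ, 1 / βmax < ε → ∀ T : ℕ,
      1 + Real.log (1 / (ε * β 0)) / Real.log ξ ≤ (T : ℝ) → β T ≤ βmax →
      ‖w T - wstar‖ ^ 2 ≤ ε) := by
  have hβ_eq : ∀ t, β t = β 0 * ξ ^ t := fun t => by
    induction t with
    | zero => simp
    | succ n ih => rw [hβrec, ih, pow_succ]; ring
  have hβ_pos : ∀ t, 0 < β t := fun t => by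
    rw [hβ_eq]; exact mul_pos hβ0 (pow_pos (zero_lt_one.trans hξ) t)
  have hinv : ∀ t, β t ≤ βmax → β t * ‖w t - wstar‖ ^ 2 ≤ 1 := by
    intro t
    induction t with
    | zero => exact fun _ => hinit
    | succ n ih =>
      intro hle
      have hn : β n ∈ Ioc 0 βmax :=
        ⟨hβ_pos n, (le_mul_of_one_le_left (hβ_pos n).le hξ.le).trans (hβrec n ▸ hle)⟩
      have hwn := (mem_closedBall_one_div_sqrt_iff (hβ_pos n)).2 (ih hn.2)
      obtain ⟨hball, hdecrease⟩ := hstep n hn.2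
      rw [← mem_closedBall_one_div_sqrt_iff (hβ_pos _), mem_closedBall, dist_eq_norm, hβrec]
      calc ‖w (n + 1) - wstar‖
          ≤ 2 * ‖gradient (Q (β n) (w n)) wstar‖ / lam (β n) :=
            (hQsmooth _ hn _ hwn).norm_sub_le_of_le_iteratedFDeriv_two (hlam _ hn)
              (convex_closedBall _ _) (mem_closedBall_self (by positivity)) hball
              (hLWSC _ hn _ hwn) hdecrease
        _ ≤ 2 * Lam (β n) / lam (β n) := by
            gcongr
            · exact (hlam _ hn).le
            · exact hLWLC _ hn _ hwn
        _ ≤ 1 / Real.sqrt (ξ * β n) := hratio _ hn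
  refine ⟨hinv, fun ε hε T hT hβT => ?_⟩
  have hε_pos : 0 < ε := (one_div_pos.2 ((hβ_pos T).trans_le hβT)).trans hε
  have hgrowth := one_le_mul_pow_of_log_div_log_le hξ (mul_pos hε_pos hβ0) hT
  have hT_inv := hβ_eq T ▸ hinv T hβT
  nlinarith [sq_nonneg ‖w T - wstar‖]

/-- SVAM convergence (Theorem 1, deterministic form). Under LWSC/LWLC with constants
`lam β`, `Lam β` satisfying `2Λ_β/λ_β ≤ 1/√(ξβ)` for all `β ∈ (0, β_max]`, if the iterates
satisfy `β_{t+1} = ξ β_t`, `β₁·‖ŵ¹ − w*‖² ≤ 1`, and each new iterate lies in the ball of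
radius `1/√β_t` around `w*` and does not increase `Q_{β_t}(·|ŵ^t)` beyond its value at `w*`,
then the invariant `β_t·‖ŵ^t − w*‖² ≤ 1` is maintained, and `‖ŵ^T − w*‖² ≤ ε` whenever
`T ≥ 1 + log(1/(ε β₁))/log ξ` and `β_T ≤ β_max`. -/
theorem stmt1
    {d : ℕ} (wstar : EuclideanSpace ℝ (Fin d))
    (βmax : ℝ) (hβmax : 0 < βmax)
    (ξ : ℝ) (hξ : 1 < ξ)
    (lam Lam : ℝ → ℝ)
    (hlam : ∀ β ∈ Ioc (0:ℝ) βmax, 0 < lam β)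
    (hLam : ∀ β ∈ Ioc (0:ℝ) βmax, 0 ≤ Lam β)
    (hratio : ∀ β ∈ Ioc (0:ℝ) βmax, 2 * Lam β / lam β ≤ 1 / Real.sqrt (ξ * β))
    (Q : ℝ → EuclideanSpace ℝ (Fin d) → EuclideanSpace ℝ (Fin d) → ℝ)
    (hQsmooth : ∀ β ∈ Ioc (0:ℝ) βmax, ∀ u ∈ closedBall wstar (1 / Real.sqrt β),
      ContDiff ℝ 2 (Q β u))
    (hLWSC : ∀ β ∈ Ioc (0:ℝ) βmax, ∀ u ∈ closedBall wstar (1 / Real.sqrt β),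
      ∀ v ∈ closedBall wstar (1 / Real.sqrt β),
      ∀ z : EuclideanSpace ℝ (Fin d),
        lam β * ‖z‖ ^ 2 ≤ iteratedFDeriv ℝ 2 (Q β u) v ![z, z])
    (hLWLC : ∀ β ∈ Ioc (0:ℝ) βmax, ∀ u ∈ closedBall wstar (1 / Real.sqrt β),
      ‖gradient (Q β u) wstar‖ ≤ Lam β)
    (w : ℕ → EuclideanSpace ℝ (Fin d)) (β : ℕ → ℝ)
    (hβ0 : 0 < β 0)
    (hβrec : ∀ t, β (t + 1) = ξ * β t)
    (hinit : β 0 * ‖w 0 - wstar‖ ^ 2 ≤ 1)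
    (hstep : ∀ t, β t ≤ βmax →
      w (t + 1) ∈ closedBall wstar (1 / Real.sqrt (β t)) ∧
      Q (β t) (w t) (w (t + 1)) ≤ Q (β t) (w t) wstar) :
    (∀ t, β t ≤ βmax → β t * ‖w t - wstar‖ ^ 2 ≤ 1) ∧
    (∀ ε : ℝ, 1 / βmax < ε → ∀ T : ℕ,
      1 + Real.log (1 / (ε * β 0)) / Real.log ξ ≤ (T : ℝ) → β T ≤ βmax →
      ‖w T - wstar‖ ^ 2 ≤ ε) :=
  stmt1_general wstar βmax ξ hξ lam Lam hlam hratio Q hQsmooth hLWSC hLWLC w β hβ0 hβrec hinit hstep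
end

section
/- Let β > 0, let x₁,…,xₙ ∈ ℝ^d satisfy ‖x_i‖₂ ≤ R for all i, let y ∈ ℝⁿ, and let w¹, w² ∈ ℝ^d with ‖w¹ − w²‖₂ ≤ τ. For j ∈ {1,2} define weights s_i^j = √(β/(2π))·exp(−(β/2)(y_i − ⟨w^j, x_i⟩)²), diagonal matrices S^j = diag(s₁^j,…,sₙ^j), and let X = [x₁,…,xₙ] ∈ ℝ^{d×n}. Then |λ_min(X S¹ Xᵀ) − λ_min(X S² Xᵀ)| ≤ n·τ·β·R³/√(2πe). -/
/-!
For each unit vector `v`, the Rayleigh quotient of `X S Xᵀ` is `∑ᵢ sᵢ ⟨v, xᵢ⟩²`. The weights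
are values of a Gaussian whose derivative is maximal at one standard deviation, so it is
`β/√(2πe)`-Lipschitz; the residuals of the two models differ by `⟨w¹ - w², xᵢ⟩`, at most `τ R`,
and `⟨v, xᵢ⟩² ≤ R²`. Hence the two Rayleigh quotients differ by at most `n τ β R³/√(2πe)`
uniformly in `v`, and so do their infima.
-/

open Real Matrix

open scoped RealInnerProductSpace

/-- The smallest eigenvalue of a real symmetric matrix, characterized as the infimum of
Rayleigh quotients over unit vectors. -/
noncomputable def lambdaMin {d : ℕ} (A : Matrix (Fin d) (Fin d) ℝ) : ℝ :=
  ⨅ v : {v : Fin d → ℝ // ∑ i, v i ^ 2 = 1}, v.1 ⬝ᵥ A.mulVec v.1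

theorem mul_exp_neg_sq_div_two_le (t : ℝ) : t * exp (-(t ^ 2 / 2)) ≤ exp (-(1 / 2)) := by
  have h : t ≤ exp ((t ^ 2 - 1) / 2) := by
    nlinarith [add_one_le_exp ((t ^ 2 - 1) / 2), sq_nonneg (t - 1)]
  calc t * exp (-(t ^ 2 / 2)) ≤ exp ((t ^ 2 - 1) / 2) * exp (-(t ^ 2 / 2)) := by gcongr
    _ = exp (-(1 / 2)) := by rw [← exp_add]; ring_nf

theorem abs_gaussian_deriv_le {β : ℝ} (hβ : 0 < β) (r : ℝ) :
    |√(β / (2 * π)) * exp (-(β / 2) * r ^ 2) * (β * r)| ≤ β / √(2 * π * exp 1) := by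
  have hmode := mul_exp_neg_sq_div_two_le (√β * |r|)
  rw [mul_pow, sq_sqrt hβ.le, sq_abs] at hmode
  calc |√(β / (2 * π)) * exp (-(β / 2) * r ^ 2) * (β * r)|
      = β / √(2 * π) * (√β * |r| * exp (-(β * r ^ 2 / 2))) := by
        rw [abs_mul, abs_mul, abs_mul, abs_of_pos hβ, abs_of_nonneg (sqrt_nonneg _),
          abs_of_pos (exp_pos _), sqrt_div hβ.le]
        ring_nf
    _ ≤ β / √(2 * π) * exp (-(1 / 2)) := by gcongr
    _ = β / √(2 * π * exp 1) := by
        rw [sqrt_mul (by positivity : (0 : ℝ) ≤ 2 * π) (exp 1), ← exp_half, exp_neg]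
        field_simp

theorem abs_gaussian_sub_le {β : ℝ} (hβ : 0 < β) (a b : ℝ) :
    |√(β / (2 * π)) * exp (-(β / 2) * a ^ 2) - √(β / (2 * π)) * exp (-(β / 2) * b ^ 2)| ≤
      β / √(2 * π * exp 1) * |a - b| := by
  have hderiv (r : ℝ) : HasDerivAt (fun r => √(β / (2 * π)) * exp (-(β / 2) * r ^ 2))
      (-(√(β / (2 * π)) * exp (-(β / 2) * r ^ 2) * (β * r))) r := by
    refine ((((hasDerivAt_pow 2 r).const_mul (-(β / 2))).exp).const_mul _).congr_deriv ?_
    push_cast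
    ring
  simpa using Convex.norm_image_sub_le_of_norm_hasDerivWithin_le
    (fun r _ => (hderiv r).hasDerivWithinAt)
    (fun r _ => by rw [norm_neg]; exact abs_gaussian_deriv_le hβ r) convex_univ
    (Set.mem_univ b) (Set.mem_univ a)

theorem abs_gaussian_residual_sub_le {E : Type*} [NormedAddCommGroup E] [InnerProductSpace ℝ E]
    {β : ℝ} (hβ : 0 < β) (y : ℝ) (w₁ w₂ x : E) :
    |√(β / (2 * π)) * exp (-(β / 2) * (y - ⟪w₁, x⟫) ^ 2) -
        √(β / (2 * π)) * exp (-(β / 2) * (y - ⟪w₂, x⟫) ^ 2)| ≤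
      β / √(2 * π * exp 1) * (‖w₁ - w₂‖ * ‖x‖) := by
  refine (abs_gaussian_sub_le hβ _ _).trans ?_
  have hres : (y - ⟪w₁, x⟫) - (y - ⟪w₂, x⟫) = -⟪w₁ - w₂, x⟫ := by
    rw [inner_sub_left]
    ring
  rw [hres, abs_neg]
  gcongr
  exact abs_real_inner_le_norm _ _

theorem sq_dotProduct_le_norm_sq {κ : Type*} [Fintype κ] {v : κ → ℝ} (hv : ∑ a, v a ^ 2 ≤ 1)
    (z : EuclideanSpace ℝ κ) : (v ⬝ᵥ z) ^ 2 ≤ ‖z‖ ^ 2 :=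
  calc (v ⬝ᵥ z) ^ 2 ≤ (∑ a, v a ^ 2) * ∑ a, z a ^ 2 := Finset.sum_mul_sq_le_sq_mul_sq _ _ _
    _ ≤ ‖z‖ ^ 2 := by
      rw [EuclideanSpace.real_norm_sq_eq]
      exact mul_le_of_le_one_left (by positivity) hv

theorem dotProduct_mulVec_eq_sum_mul_sq {ι κ : Type*} [Fintype ι] [Fintype κ]
    {A : Matrix κ κ ℝ} {s : ι → ℝ} {x : ι → κ → ℝ}
    (hA : ∀ a b, A a b = ∑ i, s i * x i a * x i b) (v : κ → ℝ) :
    v ⬝ᵥ A *ᵥ v = ∑ i, s i * (v ⬝ᵥ x i) ^ 2 := by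
  simp only [dotProduct, mulVec, hA, sq, Finset.mul_sum, Finset.sum_mul]
  conv_rhs => rw [Finset.sum_comm]
  refine Finset.sum_congr rfl fun a _ => ?_
  rw [Finset.sum_comm]
  exact Finset.sum_congr rfl fun i _ => Finset.sum_congr rfl fun b _ => by ring

theorem abs_sum_mul_sub_sum_mul_le {ι : Type*} [Fintype ι] {s t u : ι → ℝ} {c M : ℝ}
    (hst : ∀ i, |s i - t i| ≤ c) (hu₀ : ∀ i, 0 ≤ u i) (hu : ∀ i, u i ≤ M) :
    |∑ i, s i * u i - ∑ i, t i * u i| ≤ Fintype.card ι * (c * M) := by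
  rw [← Finset.sum_sub_distrib]
  refine (Finset.abs_sum_le_sum_abs _ _).trans ?_
  calc ∑ i, |s i * u i - t i * u i| ≤ ∑ _i : ι, c * M := by
        refine Finset.sum_le_sum fun i _ => ?_
        rw [← sub_mul, abs_mul, abs_of_nonneg (hu₀ i)]
        exact mul_le_mul (hst i) (hu i) (hu₀ i) ((abs_nonneg _).trans (hst i))
    _ = Fintype.card ι * (c * M) := by simp

theorem abs_ciInf_sub_ciInf_le {ι : Type*} {f g : ι → ℝ} {B : ℝ} (hB : 0 ≤ B)
    (hf : BddBelow (Set.range f)) (hg : BddBelow (Set.range g)) (h : ∀ i, |f i - g i| ≤ B) :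
    |iInf f - iInf g| ≤ B := by
  rcases isEmpty_or_nonempty ι with hι | hι
  · simpa [Real.iInf_of_isEmpty] using hB
  refine abs_sub_le_iff.mpr ⟨sub_le_comm.mp ?_, sub_le_comm.mp ?_⟩
  · exact le_ciInf fun i => by linarith [ciInf_le hf i, (abs_sub_le_iff.mp (h i)).1]
  · exact le_ciInf fun i => by linarith [ciInf_le hg i, (abs_sub_le_iff.mp (h i)).2]

/-- Stability of `λ_min(X S Xᵀ)` under perturbations of the model defining the Gaussian
likelihood weights `S`. -/
theorem stmt6
    {d n : ℕ} (β R τ : ℝ) (hβ : 0 < β)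
    (x : Fin n → EuclideanSpace ℝ (Fin d)) (hx : ∀ i, ‖x i‖ ≤ R)
    (y : Fin n → ℝ)
    (w₁ w₂ : EuclideanSpace ℝ (Fin d)) (hw : ‖w₁ - w₂‖ ≤ τ)
    (s : Fin 2 → Fin n → ℝ)
    (hs₁ : ∀ i, s 0 i = Real.sqrt (β / (2 * π)) *
      Real.exp (-(β / 2) * (y i - ⟪w₁, x i⟫) ^ 2))
    (hs₂ : ∀ i, s 1 i = Real.sqrt (β / (2 * π)) *
      Real.exp (-(β / 2) * (y i - ⟪w₂, x i⟫) ^ 2))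
    (A : Fin 2 → Matrix (Fin d) (Fin d) ℝ)
    (hA : ∀ j a b, A j a b = ∑ i, s j i * x i a * x i b) :
    |lambdaMin (A 0) - lambdaMin (A 1)| ≤
      n * τ * β * R ^ 3 / Real.sqrt (2 * π * Real.exp 1) := by
  have hτ : 0 ≤ τ := (norm_nonneg _).trans hw
  have hQ (j : Fin 2) (v : Fin d → ℝ) :
      v ⬝ᵥ A j *ᵥ v = ∑ i, s j i * (v ⬝ᵥ x i) ^ 2 :=
    dotProduct_mulVec_eq_sum_mul_sq (hA j) v
  have hs (j : Fin 2) (i : Fin n) : 0 ≤ s j i := by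
    fin_cases j
    · simp only [Fin.zero_eta, hs₁]; positivity
    · simp only [Fin.mk_one, hs₂]; positivity
  have hbdd (j : Fin 2) :
      BddBelow (Set.range fun v : {v : Fin d → ℝ // ∑ a, v a ^ 2 = 1} => v.1 ⬝ᵥ A j *ᵥ v.1) :=
    ⟨0, by
      rintro _ ⟨v, rfl⟩
      dsimp only
      rw [hQ]
      exact Finset.sum_nonneg fun i _ => mul_nonneg (hs j i) (sq_nonneg _)⟩
  have hweight (i : Fin n) : |s 0 i - s 1 i| ≤ β / √(2 * π * exp 1) * (τ * R) := by
    rw [hs₁, hs₂]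
    refine (abs_gaussian_residual_sub_le hβ (y i) w₁ w₂ (x i)).trans ?_
    gcongr
    exact hx i
  have hbound (v : Fin d → ℝ) (hv : ∑ a, v a ^ 2 ≤ 1) :
      |v ⬝ᵥ A 0 *ᵥ v - v ⬝ᵥ A 1 *ᵥ v| ≤ n * τ * β * R ^ 3 / √(2 * π * exp 1) := by
    rw [hQ, hQ]
    calc _ ≤ Fintype.card (Fin n) * (β / √(2 * π * exp 1) * (τ * R) * R ^ 2) :=
          abs_sum_mul_sub_sum_mul_le hweight (fun i => sq_nonneg _)
            fun i => (sq_dotProduct_le_norm_sq hv (x i)).trans (by gcongr; exact hx i)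
      _ = n * τ * β * R ^ 3 / √(2 * π * exp 1) := by
          rw [Fintype.card_fin]
          ring
  exact abs_ciInf_sub_ciInf_le (by simpa using hbound 0 (by simp)) (hbdd 0) (hbdd 1)
    fun v => hbound v v.2.le
end

section
/- Let d ≥ 1, β > 0, let x ∼ N(0, I_d) be a standard Gaussian vector in ℝ^d, let Δ ∈ ℝ^d with Δ ≠ 0, and let v ∈ ℝ^d with ‖v‖₂ = 1. Writing a = ⟨Δ, v⟩/‖Δ‖₂, one has E[ ⟨x, v⟩² · exp(−(β/2)·⟨Δ, x⟩²) ] = a²/(1 + β‖Δ‖₂²)^{3/2} + (1 − a²)/(1 + β‖Δ‖₂²)^{1/2}. In particular, the infimum of this expectation over unit vectors v equals 1/(1 + β‖Δ‖₂²)^{3/2}. -/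
/-!
In an orthonormal basis whose first vector is `Δ / ‖Δ‖`, the weight
`exp (-(β/2) ⟪Δ, x⟫²) exp (-‖x‖²/2)` is a product of one-dimensional Gaussians, with precision
`1 + β ‖Δ‖²` along `Δ` and `1` in every other direction. The second moment of `⟪x, v⟫` is then the
sum of the squared coordinates of `v` divided by these precisions, times the product of the
one-dimensional normalising constants. Over unit vectors `v` it is smallest when `v` points
along `Δ`.
-/

open Real MeasureTheory Module
open scoped RealInnerProductSpace

section GaussianMoments

variable {b : ℝ}

theorem integrable_pow_mul_exp_neg_mul_sq (hb : 0 < b) (n : ℕ) :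
    Integrable fun x : ℝ => x ^ n * exp (-b * x ^ 2) := by
  simpa using integrable_rpow_mul_exp_neg_mul_sq hb (neg_one_lt_zero.trans_le n.cast_nonneg)

theorem integral_mul_exp_neg_mul_sq_eq_zero : ∫ x : ℝ, x * exp (-b * x ^ 2) = 0 := by
  have h := integral_neg_eq_self (fun x : ℝ => x * exp (-b * x ^ 2)) volume
  simp only [neg_mul, neg_sq, integral_neg] at h ⊢
  linarith

theorem integral_sq_mul_exp_neg_mul_sq (hb : 0 < b) :
    ∫ x : ℝ, x ^ 2 * exp (-b * x ^ 2) = √(π / b) / (2 * b) := by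
  have hv (x : ℝ) :
      HasDerivAt (fun x => exp (-b * x ^ 2) / -(2 * b)) (x * exp (-b * x ^ 2)) x := by
    refine (((hasDerivAt_pow 2 x).const_mul (-b)).exp.div_const (-(2 * b))).congr_deriv ?_
    field_simp
    ring
  have hparts := integral_mul_deriv_eq_deriv_mul_of_integrable (u := id) (u' := fun _ => 1)
    (fun x _ => hasDerivAt_id x) (fun x _ => hv x) ?_ ?_ ?_
  · simp only [id, one_mul, ← mul_assoc, ← sq, integral_div, integral_gaussian] at hparts
    rw [hparts]
    ring
  · simpa [Pi.mul_def, ← mul_assoc, ← sq] using integrable_pow_mul_exp_neg_mul_sq hb 2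
  · simpa [Pi.mul_def] using (integrable_exp_neg_mul_sq hb).div_const (-(2 * b))
  · simpa [Pi.mul_def, mul_div_assoc] using
      (integrable_pow_mul_exp_neg_mul_sq hb 1).div_const (-(2 * b))

end GaussianMoments

section ProductGaussian

variable {ι : Type*} [Fintype ι] {b : ι → ℝ}

theorem Finset.mul_mul_prod_eq_prod_pow_mul [DecidableEq ι] {M : Type*} [CommMonoid M]
    (y f : ι → M) (i j : ι) :
    y i * y j * ∏ k, f k
      = ∏ k, y k ^ ((if i = k then 1 else 0) + (if j = k then 1 else 0)) * f k := by
  simp only [pow_add, Finset.prod_mul_distrib, Finset.prod_pow_boole, Finset.mem_univ, if_true]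

theorem integrable_mul_mul_prod_exp_neg_mul_sq (hb : ∀ k, 0 < b k) (i j : ι) :
    Integrable fun y : ι → ℝ => y i * y j * ∏ k, exp (-b k * y k ^ 2) := by
  classical
  simp_rw [Finset.mul_mul_prod_eq_prod_pow_mul]
  exact Integrable.fintype_prod fun k => integrable_pow_mul_exp_neg_mul_sq (hb k) _

theorem integral_mul_mul_prod_exp_neg_mul_sq [DecidableEq ι] (hb : ∀ k, 0 < b k) (i j : ι) :
    ∫ y : ι → ℝ, y i * y j * ∏ k, exp (-b k * y k ^ 2)
      = if i = j then (∏ k, √(π / b k)) / (2 * b i) else 0 := by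
  simp_rw [Finset.mul_mul_prod_eq_prod_pow_mul]
  rw [integral_fintype_prod_volume_eq_prod
    (fun k t => t ^ ((if i = k then 1 else 0) + (if j = k then 1 else 0)) * exp (-b k * t ^ 2))]
  split_ifs with hij
  · subst hij
    have hmoment (k : ι) :
        ∫ t, t ^ ((if i = k then 1 else 0) + (if i = k then 1 else 0)) * exp (-b k * t ^ 2)
        = √(π / b k) * if k = i then (2 * b k)⁻¹ else 1 := by
      by_cases hk : k = i
      · subst hk
        simp only [if_true, integral_sq_mul_exp_neg_mul_sq (hb k), div_eq_mul_inv]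
      · simp only [hk, Ne.symm hk, if_false, add_zero, pow_zero, one_mul, mul_one,
          integral_gaussian]
    simp only [hmoment, Finset.prod_mul_distrib, Finset.prod_ite_eq', Finset.mem_univ, if_true,
      div_eq_mul_inv]
  · refine Finset.prod_eq_zero (Finset.mem_univ i) ?_
    simp only [Ne.symm hij, if_true, if_false, add_zero, pow_one,
      integral_mul_exp_neg_mul_sq_eq_zero]

theorem integral_sq_sum_mul_prod_exp_neg_mul_sq (hb : ∀ k, 0 < b k) (w : ι → ℝ) :
    ∫ y : ι → ℝ, (∑ i, w i * y i) ^ 2 * ∏ k, exp (-b k * y k ^ 2)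
      = (∑ i, w i ^ 2 / (2 * b i)) * ∏ k, √(π / b k) := by
  classical
  have hint := integrable_mul_mul_prod_exp_neg_mul_sq hb
  have hexpand (y : ι → ℝ) : (∑ i, w i * y i) ^ 2 * ∏ k, exp (-b k * y k ^ 2)
      = ∑ i, ∑ j, w i * w j * (y i * y j * ∏ k, exp (-b k * y k ^ 2)) := by
    rw [sq, Finset.sum_mul_sum, Finset.sum_mul]
    refine Finset.sum_congr rfl fun i _ => ?_
    rw [Finset.sum_mul]
    refine Finset.sum_congr rfl fun j _ => ?_
    ring
  simp_rw [hexpand]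
  rw [integral_finsetSum _ fun i _ => integrable_finsetSum _ fun j _ => (hint i j).const_mul _]
  simp_rw [integral_finsetSum _ fun j _ => (hint _ j).const_mul _, integral_const_mul,
    integral_mul_mul_prod_exp_neg_mul_sq hb, mul_ite, mul_zero, Finset.sum_ite_eq,
    Finset.mem_univ, if_true, Finset.sum_mul]
  refine Finset.sum_congr rfl fun i _ => ?_
  ring

end ProductGaussian

section InnerProductSpace

variable {E : Type*} [NormedAddCommGroup E] [InnerProductSpace ℝ E] [FiniteDimensional ℝ E]
  [MeasurableSpace E] [BorelSpace E]

theorem OrthonormalBasis.integral_comp_repr_symm_toLp {ι F : Type*} [Fintype ι]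
    [NormedAddCommGroup F] [NormedSpace ℝ F] (e : OrthonormalBasis ι ℝ E) (f : E → F) :
    ∫ y : ι → ℝ, f (e.repr.symm (WithLp.toLp 2 y)) = ∫ x, f x := by
  rw [← e.measurePreserving_measurableEquiv.symm.integral_comp' f,
    ← (EuclideanSpace.volume_preserving_symm_measurableEquiv_toLp ι).symm.integral_comp']
  rfl

theorem integral_inner_sq_mul_exp_neg_inner_sq_mul_exp_neg_norm_sq {γ : ℝ} (hγ : 0 < 1 + γ)
    {u : E} (hu : ‖u‖ = 1) (v : E) :
    ∫ x : E, ⟪x, v⟫ ^ 2 * exp (-(γ / 2) * ⟪u, x⟫ ^ 2) * exp (-‖x‖ ^ 2 / 2)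
      = √(2 * π) ^ finrank ℝ E *
          (⟪u, v⟫ ^ 2 / (1 + γ) ^ ((3 : ℝ) / 2)
            + (‖v‖ ^ 2 - ⟪u, v⟫ ^ 2) / (1 + γ) ^ ((1 : ℝ) / 2)) := by
  classical
  have horth : Orthonormal ℝ ((↑) : ({u} : Set E) → E) := by
    simpa [orthonormal_subsingleton_iff] using hu
  obtain ⟨s, e, hus, he⟩ := horth.exists_orthonormalBasis_extension
  set i₀ : s := ⟨u, hus rfl⟩
  have he₀ : e i₀ = u := by rw [he]
  -- half the precision of the Gaussian factor along `e k`
  set b : s → ℝ := fun k => (1 + if k = i₀ then γ else 0) / 2 with hb_def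
  have hb (k : s) : 0 < b k := by simp only [hb_def]; split_ifs <;> linarith
  have hcoord (y : s → ℝ) :
      ⟪e.repr.symm (WithLp.toLp 2 y), v⟫ ^ 2
          * exp (-(γ / 2) * ⟪u, e.repr.symm (WithLp.toLp 2 y)⟫ ^ 2)
          * exp (-‖e.repr.symm (WithLp.toLp 2 y)‖ ^ 2 / 2)
        = (∑ k, ⟪e k, v⟫ * y k) ^ 2 * ∏ k, exp (-b k * y k ^ 2) := by
    set x := e.repr.symm (WithLp.toLp 2 y)
    have hinner_v : ⟪x, v⟫ = ∑ k, ⟪e k, v⟫ * y k := by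
      simp only [x, ← e.sum_repr_symm, sum_inner, real_inner_smul_left, mul_comm]
    have hinner_u : ⟪u, x⟫ = y i₀ := by
      rw [← he₀, ← e.repr_apply_apply, LinearIsometryEquiv.apply_symm_apply]
    have hnorm : ‖x‖ ^ 2 = ∑ k, y k ^ 2 := by
      simp only [x, LinearIsometryEquiv.norm_map, EuclideanSpace.norm_sq_eq, Real.norm_eq_abs,
        sq_abs]
    have hexponent (k : s) :
        -b k * y k ^ 2 = -(y k ^ 2) / 2 + if k = i₀ then -(γ / 2) * y k ^ 2 else 0 := by
      simp only [hb_def]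
      split_ifs <;> ring
    rw [hinner_v, hinner_u, hnorm, mul_assoc, ← exp_add, ← exp_sum]
    simp only [hexponent, Finset.sum_add_distrib, Finset.sum_ite_eq', Finset.mem_univ, if_true,
      ← Finset.sum_div, Finset.sum_neg_distrib]
    ring_nf
  rw [← e.integral_comp_repr_symm_toLp]
  simp_rw [hcoord]
  rw [integral_sq_sum_mul_prod_exp_neg_mul_sq hb]
  have hsum :
      ∑ k, ⟪e k, v⟫ ^ 2 / (2 * b k) = ⟪u, v⟫ ^ 2 / (1 + γ) + (‖v‖ ^ 2 - ⟪u, v⟫ ^ 2) := by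
    have hterm (k : s) : ⟪e k, v⟫ ^ 2 / (2 * b k)
        = ⟪e k, v⟫ ^ 2 + if k = i₀ then ⟪e k, v⟫ ^ 2 / (1 + γ) - ⟪e k, v⟫ ^ 2 else 0 := by
      simp only [hb_def]
      split_ifs <;> field_simp <;> ring
    simp only [hterm, Finset.sum_add_distrib, Finset.sum_ite_eq', Finset.mem_univ, if_true,
      e.sum_sq_inner_right, he₀]
    ring
  have hprod : ∏ k, √(π / b k) = √(2 * π) ^ finrank ℝ E / √(1 + γ) := by
    have hfactor (k : s) : √(π / b k) = √(2 * π) * if k = i₀ then (√(1 + γ))⁻¹ else 1 := by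
      simp only [hb_def]
      split_ifs
      · rw [← sqrt_inv, ← sqrt_mul (by positivity)]
        congr 1
        field_simp
      · rw [add_zero, mul_one]
        congr 1
        field_simp
    rw [Finset.prod_congr rfl fun k _ => hfactor k, Finset.prod_mul_distrib, Finset.prod_const,
      Finset.prod_ite_eq', if_pos (Finset.mem_univ _), Finset.card_univ,
      ← finrank_eq_card_basis e.toBasis, div_eq_mul_inv]
  have hrpow : (1 + γ) ^ ((3 : ℝ) / 2) = (1 + γ) * √(1 + γ) := by
    rw [sqrt_eq_rpow, ← rpow_one_add' hγ.le (by norm_num)]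
    norm_num
  rw [hsum, hprod, hrpow, ← sqrt_eq_rpow]
  field_simp

theorem integral_inner_sq_mul_exp_neg_inner_sq_mul_exp_neg_norm_sq_of_ne_zero {β : ℝ} {Δ : E}
    (hΔ : Δ ≠ 0) (hβ : 0 < 1 + β * ‖Δ‖ ^ 2) (v : E) :
    ∫ x : E, ⟪x, v⟫ ^ 2 * exp (-(β / 2) * ⟪Δ, x⟫ ^ 2) * exp (-‖x‖ ^ 2 / 2)
      = √(2 * π) ^ finrank ℝ E *
          ((⟪Δ, v⟫ / ‖Δ‖) ^ 2 / (1 + β * ‖Δ‖ ^ 2) ^ ((3 : ℝ) / 2)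
            + (‖v‖ ^ 2 - (⟪Δ, v⟫ / ‖Δ‖) ^ 2) / (1 + β * ‖Δ‖ ^ 2) ^ ((1 : ℝ) / 2)) := by
  have hu : ‖‖Δ‖⁻¹ • Δ‖ = 1 := by simpa using norm_smul_inv_norm (𝕜 := ℝ) hΔ
  have hinner (y : E) : ⟪Δ, y⟫ / ‖Δ‖ = ⟪‖Δ‖⁻¹ • Δ, y⟫ := by
    rw [real_inner_smul_left, div_eq_inv_mul]
  have hexponent (x : E) :
      -(β / 2) * ⟪Δ, x⟫ ^ 2 = -(β * ‖Δ‖ ^ 2 / 2) * ⟪‖Δ‖⁻¹ • Δ, x⟫ ^ 2 := by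
    rw [← hinner]
    field_simp
  simp_rw [hexponent, hinner]
  exact integral_inner_sq_mul_exp_neg_inner_sq_mul_exp_neg_norm_sq hβ hu v

end InnerProductSpace

theorem rpow_neg_div_two_mul_sqrt_pow {a : ℝ} (ha : 0 < a) (n : ℕ) :
    a ^ (-(n : ℝ) / 2) * √a ^ n = 1 := by
  rw [sqrt_eq_rpow, ← rpow_natCast, ← rpow_mul ha.le, ← rpow_add ha]
  ring_nf
  exact rpow_zero a

theorem one_div_rpow_three_halves_le {c t : ℝ} (hc : 1 ≤ c) (ht : t ≤ 1) :
    1 / c ^ ((3 : ℝ) / 2) ≤ t / c ^ ((3 : ℝ) / 2) + (1 - t) / c ^ ((1 : ℝ) / 2) := by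
  have hpow : c ^ ((1 : ℝ) / 2) ≤ c ^ ((3 : ℝ) / 2) := rpow_le_rpow_of_exponent_le hc (by norm_num)
  calc 1 / c ^ ((3 : ℝ) / 2) = t / c ^ ((3 : ℝ) / 2) + (1 - t) / c ^ ((3 : ℝ) / 2) := by ring
    _ ≤ t / c ^ ((3 : ℝ) / 2) + (1 - t) / c ^ ((1 : ℝ) / 2) := by gcongr

theorem stmt7_general
    {d : ℕ} (β : ℝ) (hβ : 0 < β)
    (Δ : EuclideanSpace ℝ (Fin d)) (hΔ : Δ ≠ 0) :
    (∀ v : EuclideanSpace ℝ (Fin d), ‖v‖ = 1 →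
      (2 * π) ^ (-(d : ℝ) / 2) *
        ∫ x : EuclideanSpace ℝ (Fin d),
          ⟪x, v⟫ ^ 2 * Real.exp (-(β / 2) * ⟪Δ, x⟫ ^ 2) * Real.exp (-‖x‖ ^ 2 / 2)
      = (⟪Δ, v⟫ / ‖Δ‖) ^ 2 / (1 + β * ‖Δ‖ ^ 2) ^ ((3 : ℝ) / 2)
        + (1 - (⟪Δ, v⟫ / ‖Δ‖) ^ 2) / (1 + β * ‖Δ‖ ^ 2) ^ ((1 : ℝ) / 2)) ∧
    (⨅ v : {v : EuclideanSpace ℝ (Fin d) // ‖v‖ = 1},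
      (2 * π) ^ (-(d : ℝ) / 2) *
        ∫ x : EuclideanSpace ℝ (Fin d),
          ⟪x, (v : EuclideanSpace ℝ (Fin d))⟫ ^ 2 *
            Real.exp (-(β / 2) * ⟪Δ, x⟫ ^ 2) * Real.exp (-‖x‖ ^ 2 / 2))
      = 1 / (1 + β * ‖Δ‖ ^ 2) ^ ((3 : ℝ) / 2) := by
  have hc : 1 ≤ 1 + β * ‖Δ‖ ^ 2 := le_add_of_nonneg_right (by positivity)
  have hformula (v : EuclideanSpace ℝ (Fin d)) (hv : ‖v‖ = 1) :
      (2 * π) ^ (-(d : ℝ) / 2) *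
        ∫ x : EuclideanSpace ℝ (Fin d),
          ⟪x, v⟫ ^ 2 * Real.exp (-(β / 2) * ⟪Δ, x⟫ ^ 2) * Real.exp (-‖x‖ ^ 2 / 2)
      = (⟪Δ, v⟫ / ‖Δ‖) ^ 2 / (1 + β * ‖Δ‖ ^ 2) ^ ((3 : ℝ) / 2)
        + (1 - (⟪Δ, v⟫ / ‖Δ‖) ^ 2) / (1 + β * ‖Δ‖ ^ 2) ^ ((1 : ℝ) / 2) := by
    rw [integral_inner_sq_mul_exp_neg_inner_sq_mul_exp_neg_norm_sq_of_ne_zero hΔ (by linarith),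
      finrank_euclideanSpace_fin, ← mul_assoc, rpow_neg_div_two_mul_sqrt_pow (by positivity),
      one_mul, hv, one_pow]
  refine ⟨hformula, ?_⟩
  have hu : ‖‖Δ‖⁻¹ • Δ‖ = 1 := by simpa using norm_smul_inv_norm (𝕜 := ℝ) hΔ
  have : Nonempty {v : EuclideanSpace ℝ (Fin d) // ‖v‖ = 1} := ⟨⟨_, hu⟩⟩
  refine IsGLB.ciInf_eq (IsLeast.isGLB ⟨⟨⟨_, hu⟩, ?_⟩, ?_⟩)
  · dsimp only
    rw [hformula _ hu, real_inner_smul_right, real_inner_self_eq_norm_sq]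
    field_simp
    ring
  · rintro _ ⟨⟨v, hv⟩, rfl⟩
    dsimp only
    rw [hformula v hv]
    refine one_div_rpow_three_halves_le hc ?_
    rw [div_pow, div_le_one (by positivity), ← sq_abs]
    exact pow_le_pow_left₀ (abs_nonneg _) (by simpa [hv] using abs_real_inner_le_norm Δ v) 2

/-- Gaussian expectation identity for the LWSC constant of robust least squares regression
(noiseless case): for `x ∼ N(0, I_d)`, a nonzero `Δ` and a unit vector `v` with
`a = ⟨Δ,v⟩/‖Δ‖`, `E[⟨x,v⟩²·exp(−(β/2)⟨Δ,x⟩²)] = a²/(1+β‖Δ‖²)^{3/2} + (1−a²)/(1+β‖Δ‖²)^{1/2}`,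
and the infimum of this expectation over unit vectors equals `1/(1+β‖Δ‖²)^{3/2}`. -/
theorem stmt7
    {d : ℕ} (hd : 1 ≤ d) (β : ℝ) (hβ : 0 < β)
    (Δ : EuclideanSpace ℝ (Fin d)) (hΔ : Δ ≠ 0) :
    (∀ v : EuclideanSpace ℝ (Fin d), ‖v‖ = 1 →
      (2 * π) ^ (-(d : ℝ) / 2) *
        ∫ x : EuclideanSpace ℝ (Fin d),
          ⟪x, v⟫ ^ 2 * Real.exp (-(β / 2) * ⟪Δ, x⟫ ^ 2) * Real.exp (-‖x‖ ^ 2 / 2)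
      = (⟪Δ, v⟫ / ‖Δ‖) ^ 2 / (1 + β * ‖Δ‖ ^ 2) ^ ((3 : ℝ) / 2)
        + (1 - (⟪Δ, v⟫ / ‖Δ‖) ^ 2) / (1 + β * ‖Δ‖ ^ 2) ^ ((1 : ℝ) / 2)) ∧
    (⨅ v : {v : EuclideanSpace ℝ (Fin d) // ‖v‖ = 1},
      (2 * π) ^ (-(d : ℝ) / 2) *
        ∫ x : EuclideanSpace ℝ (Fin d),
          ⟪x, (v : EuclideanSpace ℝ (Fin d))⟫ ^ 2 *
            Real.exp (-(β / 2) * ⟪Δ, x⟫ ^ 2) * Real.exp (-‖x‖ ^ 2 / 2))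
      = 1 / (1 + β * ‖Δ‖ ^ 2) ^ ((3 : ℝ) / 2) :=
  stmt7_general β hβ Δ hΔ
end

section
/- Let β > 0, Δ ∈ ℝ^d, let x₁,…,x_B ∈ ℝ^d, b ∈ ℝ^B, and define s_i = √(β/(2π))·exp(−(β/2)(b_i − ⟨Δ, x_i⟩)²) for i = 1,…,B. Let X_B = [x₁,…,x_B] ∈ ℝ^{d×B}. Then Σ_{i=1}^B (s_i·b_i)² ≤ [ (β‖Δ‖₂²·λ_max(X_B X_Bᵀ)/(2π))^{1/3} + (B/(2πe))^{1/3} ]³. -/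
/-!
Write `aᵢ = ⟪Δ, xᵢ⟫` and `k = √(β / 2π)`. Since `|t| e^{-βt²/2} ≤ 1/√(βe)`, splitting
`|bᵢ| ≤ |aᵢ| + |bᵢ - aᵢ|` gives `sᵢ |bᵢ| ≤ k |aᵢ| + k/√(βe)`. Minkowski's inequality in `ℝ^B` then
bounds `‖S_B b‖` by `k ‖a‖ + √(B / 2πe)`, and `‖a‖² = Δᵀ X_B X_Bᵀ Δ ≤ ‖Δ‖² λ_max`. Finally
`(√P + √Q)² ≤ (P^{1/3} + Q^{1/3})³` is the subadditivity of `t ↦ t^{2/3}` applied to `√P, √Q`.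
-/

open Real Matrix

open scoped RealInnerProductSpace

/-- The largest eigenvalue of a real symmetric matrix, characterized as the supremum of
Rayleigh quotients over unit vectors. -/
noncomputable def lambdaMax {d : ℕ} (A : Matrix (Fin d) (Fin d) ℝ) : ℝ :=
  ⨆ v : {v : Fin d → ℝ // ∑ i, v i ^ 2 = 1}, v.1 ⬝ᵥ A.mulVec v.1

lemma abs_mul_exp_neg_mul_sq_le {β : ℝ} (hβ : 0 < β) (t : ℝ) :
    |t| * exp (-(β / 2) * t ^ 2) ≤ √(1 / (β * exp 1)) := by
  rw [le_sqrt (by positivity) (by positivity), mul_pow, sq_abs, ← exp_nat_mul,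
    le_div_iff₀ (by positivity)]
  have hpeak := mul_exp_neg_le_exp_neg_one (β * t ^ 2)
  calc t ^ 2 * exp ((2 : ℕ) * (-(β / 2) * t ^ 2)) * (β * exp 1)
      = β * t ^ 2 * exp (-(β * t ^ 2)) * exp 1 := by push_cast; ring_nf
    _ ≤ exp (-1) * exp 1 := by gcongr
    _ = 1 := by rw [← exp_add, neg_add_cancel, exp_zero]

lemma exp_neg_mul_sq_sub_mul_abs_le {β : ℝ} (hβ : 0 < β) (a b : ℝ) :
    exp (-(β / 2) * (b - a) ^ 2) * |b| ≤ |a| + √(1 / (β * exp 1)) := by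
  have hexp : exp (-(β / 2) * (b - a) ^ 2) ≤ 1 :=
    exp_le_one_iff.mpr (by nlinarith [sq_nonneg (b - a)])
  calc exp (-(β / 2) * (b - a) ^ 2) * |b|
      ≤ exp (-(β / 2) * (b - a) ^ 2) * (|a| + |b - a|) := by
        gcongr; simpa using abs_add_le a (b - a)
    _ = exp (-(β / 2) * (b - a) ^ 2) * |a| + |b - a| * exp (-(β / 2) * (b - a) ^ 2) := by ring
    _ ≤ 1 * |a| + √(1 / (β * exp 1)) := by
        gcongr
        exact abs_mul_exp_neg_mul_sq_le hβ (b - a)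
    _ = |a| + √(1 / (β * exp 1)) := by rw [one_mul]

lemma sum_sq_le_sq_sqrt_add_sqrt {ι : Type*} (s : Finset ι) {w u v : ι → ℝ}
    (h : ∀ i ∈ s, |w i| ≤ u i + v i) :
    ∑ i ∈ s, w i ^ 2 ≤ (√(∑ i ∈ s, u i ^ 2) + √(∑ i ∈ s, v i ^ 2)) ^ 2 := by
  have hU := sq_sqrt (Finset.sum_nonneg fun i (_ : i ∈ s) => sq_nonneg (u i))
  have hV := sq_sqrt (Finset.sum_nonneg fun i (_ : i ∈ s) => sq_nonneg (v i))
  calc ∑ i ∈ s, w i ^ 2 ≤ ∑ i ∈ s, (u i + v i) ^ 2 :=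
        Finset.sum_le_sum fun i hi => sq_le_sq' (abs_le.mp (h i hi)).1 (abs_le.mp (h i hi)).2
    _ = ∑ i ∈ s, u i ^ 2 + 2 * ∑ i ∈ s, u i * v i + ∑ i ∈ s, v i ^ 2 := by
        simp only [add_sq, Finset.sum_add_distrib, Finset.mul_sum, mul_assoc]
    _ ≤ ∑ i ∈ s, u i ^ 2 + 2 * (√(∑ i ∈ s, u i ^ 2) * √(∑ i ∈ s, v i ^ 2))
          + ∑ i ∈ s, v i ^ 2 := by
        gcongr; exact sum_mul_le_sqrt_mul_sqrt s u v
    _ = _ := by rw [add_sq, hU, hV]; ring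

lemma sq_sqrt_add_sqrt_le_rpow_third {P Q : ℝ} (hP : 0 ≤ P) (hQ : 0 ≤ Q) :
    (√P + √Q) ^ 2 ≤ (P ^ ((1 : ℝ) / 3) + Q ^ ((1 : ℝ) / 3)) ^ 3 := by
  have hroot : ∀ t : ℝ, 0 ≤ t → √t ^ ((2 : ℝ) / 3) = t ^ ((1 : ℝ) / 3) := fun t ht => by
    rw [sqrt_eq_rpow, ← rpow_mul ht]; norm_num
  have hsum : 0 ≤ √P + √Q := by positivity
  calc (√P + √Q) ^ 2 = ((√P + √Q) ^ ((2 : ℝ) / 3)) ^ 3 := by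
        rw [← rpow_natCast _ 3, ← rpow_mul hsum]; norm_num
    _ ≤ (√P ^ ((2 : ℝ) / 3) + √Q ^ ((2 : ℝ) / 3)) ^ 3 := by
        gcongr
        exact rpow_add_le_add_rpow (sqrt_nonneg P) (sqrt_nonneg Q) (by norm_num) (by norm_num)
    _ = _ := by rw [hroot P hP, hroot Q hQ]

lemma bddAbove_rayleigh {d : ℕ} (A : Matrix (Fin d) (Fin d) ℝ) :
    BddAbove (Set.range fun v : {v : Fin d → ℝ // ∑ i, v i ^ 2 = 1} => v.1 ⬝ᵥ A *ᵥ v.1) := by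
  refine ⟨∑ a, ∑ c, |A a c|, ?_⟩
  rintro _ ⟨⟨v, hv⟩, rfl⟩
  have hle : ∀ a, |v a| ≤ 1 := fun a => (sq_le_one_iff_abs_le_one _).mp <|
    hv ▸ Finset.single_le_sum (fun i _ => sq_nonneg (v i)) (Finset.mem_univ a)
  simp only [dotProduct, mulVec, Finset.mul_sum]
  gcongr with a _ c _
  calc v a * (A a c * v c) ≤ |v a| * (|A a c| * |v c|) := by
        rw [← abs_mul, ← abs_mul]; exact le_abs_self _
    _ ≤ 1 * (|A a c| * 1) := by gcongr <;> exact hle _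
    _ = |A a c| := by ring

lemma dotProduct_mulVec_le_lambdaMax {d : ℕ} (A : Matrix (Fin d) (Fin d) ℝ) {v : Fin d → ℝ}
    (hv : ∑ i, v i ^ 2 = 1) : v ⬝ᵥ A *ᵥ v ≤ lambdaMax A :=
  le_ciSup (bddAbove_rayleigh A) ⟨v, hv⟩

lemma dotProduct_mulVec_le_sum_sq_mul_lambdaMax {d : ℕ} (A : Matrix (Fin d) (Fin d) ℝ)
    (v : Fin d → ℝ) : v ⬝ᵥ A *ᵥ v ≤ (∑ i, v i ^ 2) * lambdaMax A := by
  set r := √(∑ i, v i ^ 2)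
  have hr2 : r ^ 2 = ∑ i, v i ^ 2 := sq_sqrt (Finset.sum_nonneg fun i _ => sq_nonneg (v i))
  rcases eq_or_ne r 0 with hr | hr
  · have hv : v = 0 := by
      ext i
      have := (Finset.sum_eq_zero_iff_of_nonneg fun i _ => sq_nonneg (v i)).mp
        (by rw [← hr2, hr]; ring) i (Finset.mem_univ i)
      simpa using this
    simp [hv]
  · have hunit : ∑ i, (r⁻¹ • v) i ^ 2 = 1 := by
      simp only [Pi.smul_apply, smul_eq_mul, mul_pow, ← Finset.mul_sum, ← hr2]
      field_simp
    have hv : v = r • r⁻¹ • v := by rw [smul_smul, mul_inv_cancel₀ hr, one_smul]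
    calc v ⬝ᵥ A *ᵥ v = r ^ 2 * ((r⁻¹ • v) ⬝ᵥ A *ᵥ (r⁻¹ • v)) := by
          conv_lhs => rw [hv]
          rw [mulVec_smul, dotProduct_smul, smul_dotProduct, smul_eq_mul, smul_eq_mul]; ring
      _ ≤ r ^ 2 * lambdaMax A := by gcongr; exact dotProduct_mulVec_le_lambdaMax A hunit
      _ = (∑ i, v i ^ 2) * lambdaMax A := by rw [hr2]

lemma dotProduct_mulVec_eq_sum_sq_of_gram {n ι : Type*} [Fintype n] [Fintype ι]
    {A : Matrix n n ℝ} {x : ι → n → ℝ} (hA : ∀ a c, A a c = ∑ i, x i a * x i c) (v : n → ℝ) :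
    v ⬝ᵥ A *ᵥ v = ∑ i, (x i ⬝ᵥ v) ^ 2 := by
  simp only [dotProduct, mulVec, hA, sq, Finset.mul_sum, Finset.sum_mul]
  conv_rhs => rw [Finset.sum_comm]
  refine Finset.sum_congr rfl fun a _ => ?_
  rw [Finset.sum_comm]
  exact Finset.sum_congr rfl fun i _ => Finset.sum_congr rfl fun c _ => by ring

lemma sum_inner_sq_le_norm_sq_mul_lambdaMax {d B : ℕ} (Δ : EuclideanSpace ℝ (Fin d))
    (x : Fin B → EuclideanSpace ℝ (Fin d)) {XB : Matrix (Fin d) (Fin d) ℝ}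
    (hXB : ∀ a c, XB a c = ∑ i, x i a * x i c) :
    ∑ i, ⟪Δ, x i⟫ ^ 2 ≤ ‖Δ‖ ^ 2 * lambdaMax XB := by
  rw [EuclideanSpace.real_norm_sq_eq]
  calc ∑ i, ⟪Δ, x i⟫ ^ 2 = Δ.ofLp ⬝ᵥ XB *ᵥ Δ.ofLp := by
        rw [dotProduct_mulVec_eq_sum_sq_of_gram (x := fun i => (x i).ofLp) hXB]
        simp only [EuclideanSpace.inner_eq_star_dotProduct, star_trivial]
    _ ≤ _ := dotProduct_mulVec_le_sum_sq_mul_lambdaMax XB Δ.ofLp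

/-- Deterministic bound on the total squared weighted corruption `‖S_B b‖₂²` in robust
least squares regression. -/
theorem stmt10
    {d B : ℕ} (β : ℝ) (hβ : 0 < β)
    (Δ : EuclideanSpace ℝ (Fin d))
    (x : Fin B → EuclideanSpace ℝ (Fin d)) (b : Fin B → ℝ)
    (s : Fin B → ℝ)
    (hs : ∀ i, s i = Real.sqrt (β / (2 * π)) *
      Real.exp (-(β / 2) * (b i - ⟪Δ, x i⟫) ^ 2))
    (XB : Matrix (Fin d) (Fin d) ℝ)
    (hXB : ∀ a c, XB a c = ∑ i, x i a * x i c) :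
    ∑ i, (s i * b i) ^ 2 ≤
      ((β * ‖Δ‖ ^ 2 * lambdaMax XB / (2 * π)) ^ ((1 : ℝ) / 3)
        + ((B : ℝ) / (2 * π * Real.exp 1)) ^ ((1 : ℝ) / 3)) ^ 3 := by
  set k := √(β / (2 * π))
  set c := √(1 / (β * exp 1))
  have hk : k ^ 2 = β / (2 * π) := sq_sqrt (by positivity)
  have hpoint : ∀ i ∈ Finset.univ, |s i * b i| ≤ k * |⟪Δ, x i⟫| + k * c := fun i _ => by
    rw [hs i, mul_assoc, abs_mul, abs_mul, abs_of_nonneg (sqrt_nonneg _),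
      abs_of_pos (exp_pos _), ← mul_add]
    gcongr
    exact exp_neg_mul_sq_sub_mul_abs_le hβ _ _
  have hP : ∑ i, (k * |⟪Δ, x i⟫|) ^ 2 ≤ β * ‖Δ‖ ^ 2 * lambdaMax XB / (2 * π) := by
    simp only [mul_pow, sq_abs, ← Finset.mul_sum, hk]
    calc β / (2 * π) * ∑ i, ⟪Δ, x i⟫ ^ 2 ≤ β / (2 * π) * (‖Δ‖ ^ 2 * lambdaMax XB) := by
          gcongr; exact sum_inner_sq_le_norm_sq_mul_lambdaMax Δ x hXB
      _ = _ := by ring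
  have hQ : ∑ _i : Fin B, (k * c) ^ 2 = B / (2 * π * exp 1) := by
    rw [Finset.sum_const, Finset.card_univ, Fintype.card_fin, nsmul_eq_mul, mul_pow, hk,
      sq_sqrt (by positivity)]
    field_simp
  have hP₀ : 0 ≤ β * ‖Δ‖ ^ 2 * lambdaMax XB / (2 * π) :=
    (Finset.sum_nonneg fun i _ => sq_nonneg _).trans hP
  calc ∑ i, (s i * b i) ^ 2
      ≤ (√(∑ i, (k * |⟪Δ, x i⟫|) ^ 2) + √(∑ _i : Fin B, (k * c) ^ 2)) ^ 2 :=
        sum_sq_le_sq_sqrt_add_sqrt _ hpoint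
    _ ≤ (√(β * ‖Δ‖ ^ 2 * lambdaMax XB / (2 * π)) + √(B / (2 * π * exp 1))) ^ 2 := by
        rw [hQ]; gcongr
    _ ≤ _ := sq_sqrt_add_sqrt_le_rpow_third hP₀ (by positivity)
end

section
/- For all reals p > 0 and q > 0, the function g(k) = q·k² + p·k²/(k−1)² on the interval (1, ∞) attains its minimum at k = 1 + (p/q)^{1/3}, and the minimum value equals (q^{1/3} + p^{1/3})³. -/
/-!
Write `a = q^{1/3}` and `b = p^{1/3}`. For `k ≠ 1` the gap `g(k) - (a + b)³` factors as
`(a(k-1) - b)² · (a(k-1)² + 2(a+b)(k-1) + b) / (k-1)²`, which is nonnegative for `k > 1` and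
vanishes at `k = 1 + b/a = 1 + (p/q)^{1/3}`.
-/

open Real Set

lemma cube_mul_sq_add_cube_mul_sq_div_sub_cube_add {a b k : ℝ} (hk : k ≠ 1) :
    a ^ 3 * k ^ 2 + b ^ 3 * k ^ 2 / (k - 1) ^ 2 - (a + b) ^ 3 =
      (a * (k - 1) - b) ^ 2 * (a * (k - 1) ^ 2 + 2 * (a + b) * (k - 1) + b) / (k - 1) ^ 2 := by
  have : k - 1 ≠ 0 := sub_ne_zero.mpr hk
  field_simp
  ring

lemma cube_add_le_cube_mul_sq_add_cube_mul_sq_div {a b k : ℝ} (ha : 0 ≤ a) (hb : 0 ≤ b)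
    (hk : 1 < k) : (a + b) ^ 3 ≤ a ^ 3 * k ^ 2 + b ^ 3 * k ^ 2 / (k - 1) ^ 2 := by
  have hk₁ : 0 < k - 1 := sub_pos.mpr hk
  rw [← sub_nonneg, cube_mul_sq_add_cube_mul_sq_div_sub_cube_add hk.ne']
  positivity

lemma cube_mul_sq_add_cube_mul_sq_div_eq_cube_add {a b : ℝ} (ha : a ≠ 0) (hb : b ≠ 0) :
    a ^ 3 * (1 + b / a) ^ 2 + b ^ 3 * (1 + b / a) ^ 2 / (1 + b / a - 1) ^ 2 = (a + b) ^ 3 := by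
  rw [← sub_eq_zero, cube_mul_sq_add_cube_mul_sq_div_sub_cube_add (by simpa using div_ne_zero hb ha)]
  field_simp
  ring

lemma rpow_one_div_three_pow_three {x : ℝ} (hx : 0 ≤ x) : (x ^ ((1 : ℝ) / 3)) ^ 3 = x := by
  rw [one_div]
  exact_mod_cast rpow_inv_natCast_pow hx three_ne_zero

/-- For `p, q > 0`, the function `g(k) = q·k² + p·k²/(k−1)²` on `(1, ∞)` attains its
minimum at `k = 1 + (p/q)^{1/3}`, and the minimum value equals `(q^{1/3} + p^{1/3})³`. -/
theorem stmt11 (p q : ℝ) (hp : 0 < p) (hq : 0 < q) :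
    (∀ k ∈ Ioi (1 : ℝ),
      (q ^ ((1 : ℝ) / 3) + p ^ ((1 : ℝ) / 3)) ^ 3 ≤
        q * k ^ 2 + p * k ^ 2 / (k - 1) ^ 2) ∧
    (1 + (p / q) ^ ((1 : ℝ) / 3) ∈ Ioi (1 : ℝ)) ∧
    (q * (1 + (p / q) ^ ((1 : ℝ) / 3)) ^ 2 +
        p * (1 + (p / q) ^ ((1 : ℝ) / 3)) ^ 2 / ((1 + (p / q) ^ ((1 : ℝ) / 3)) - 1) ^ 2
      = (q ^ ((1 : ℝ) / 3) + p ^ ((1 : ℝ) / 3)) ^ 3) := by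
  have ha : 0 < q ^ ((1 : ℝ) / 3) := rpow_pos_of_pos hq _
  have hb : 0 < p ^ ((1 : ℝ) / 3) := rpow_pos_of_pos hp _
  have hpq : (p / q) ^ ((1 : ℝ) / 3) = p ^ ((1 : ℝ) / 3) / q ^ ((1 : ℝ) / 3) :=
    div_rpow hp.le hq.le _
  have ha₃ := rpow_one_div_three_pow_three hq.le
  have hb₃ := rpow_one_div_three_pow_three hp.le
  refine ⟨fun k hk => ?_, ?_, ?_⟩
  · simpa only [ha₃, hb₃] using cube_add_le_cube_mul_sq_add_cube_mul_sq_div ha.le hb.le hk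
  · rw [hpq]
    exact lt_add_of_pos_right 1 (div_pos hb ha)
  · simpa only [hpq, ha₃, hb₃] using cube_mul_sq_add_cube_mul_sq_div_eq_cube_add ha.ne' hb.ne'
end

section
/- Let β > 0, τ ≥ 0, and let Δ¹, Δ² ∈ ℝ^d satisfy ‖Δ¹‖₂ ≤ 1/√β, ‖Δ²‖₂ ≤ 1/√β and ‖Δ¹ − Δ²‖₂ ≤ τ. Then for every ε ∈ ℝ^d, | exp(−(β/2)‖ε − Δ¹‖₂²) − exp(−(β/2)‖ε − Δ²‖₂²) | ≤ 3τ·(β‖ε‖₂ + 2√β). -/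
/-!
The weight `exp (-(β/2) t²)` is a 1-Lipschitz function of `(β/2) t²` (as `exp (-·)` is on
`[0, ∞)`), and by the difference of squares
`|‖u‖² - ‖v‖²| ≤ ‖u - v‖ (‖u‖ + ‖v‖)`. With `u = ε - Δ¹`, `v = ε - Δ²` the first factor is at
most `τ` and the second at most `2 (‖ε‖ + 1/√β)`, giving the bound `τ (β ‖ε‖ + √β)`.
-/

open Real

theorem Real.abs_exp_neg_sub_exp_neg_le {a b : ℝ} (ha : 0 ≤ a) (hb : 0 ≤ b) :
    |exp (-a) - exp (-b)| ≤ |a - b| := by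
  wlog hba : b ≤ a generalizing a b
  · rw [abs_sub_comm, abs_sub_comm a]
    exact this hb ha (le_of_not_ge hba)
  have hexp_le_one : exp (-b) ≤ 1 := exp_le_one_iff.2 (neg_nonpos.2 hb)
  have hsplit : exp (-a) = exp (-b) * exp (b - a) := by rw [← exp_add]; ring_nf
  have htangent := add_one_le_exp (b - a)
  rw [abs_sub_comm, abs_of_nonneg (sub_nonneg.2 (exp_le_exp.2 (neg_le_neg hba))),
    abs_of_nonneg (sub_nonneg.2 hba)]
  nlinarith [exp_pos (-b)]

theorem abs_norm_sq_sub_norm_sq_le {E : Type*} [SeminormedAddCommGroup E] (u v : E) :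
    |‖u‖ ^ 2 - ‖v‖ ^ 2| ≤ ‖u - v‖ * (‖u‖ + ‖v‖) := by
  rw [sq_sub_sq, abs_mul, abs_of_nonneg (by positivity : 0 ≤ ‖u‖ + ‖v‖), mul_comm]
  exact mul_le_mul_of_nonneg_right (abs_norm_sub_norm_le u v) (by positivity)

theorem abs_exp_neg_mul_norm_sq_sub_le {E : Type*} [SeminormedAddCommGroup E] {c : ℝ}
    (hc : 0 ≤ c) (u v : E) :
    |exp (-c * ‖u‖ ^ 2) - exp (-c * ‖v‖ ^ 2)| ≤ c * ‖u - v‖ * (‖u‖ + ‖v‖) :=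
  calc |exp (-c * ‖u‖ ^ 2) - exp (-c * ‖v‖ ^ 2)|
      ≤ |c * ‖u‖ ^ 2 - c * ‖v‖ ^ 2| := by
        simpa only [neg_mul] using Real.abs_exp_neg_sub_exp_neg_le
          (by positivity : 0 ≤ c * ‖u‖ ^ 2) (by positivity : 0 ≤ c * ‖v‖ ^ 2)
    _ = c * |‖u‖ ^ 2 - ‖v‖ ^ 2| := by rw [← mul_sub, abs_mul, abs_of_nonneg hc]
    _ ≤ c * ‖u - v‖ * (‖u‖ + ‖v‖) := by
        rw [mul_assoc]; exact mul_le_mul_of_nonneg_left (abs_norm_sq_sub_norm_sq_le u v) hc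

theorem stmt13_general
    {d : ℕ} (β τ : ℝ) (hβ : 0 < β)
    (Δ₁ Δ₂ : EuclideanSpace ℝ (Fin d))
    (hΔ₁ : ‖Δ₁‖ ≤ 1 / Real.sqrt β) (hΔ₂ : ‖Δ₂‖ ≤ 1 / Real.sqrt β)
    (hΔ : ‖Δ₁ - Δ₂‖ ≤ τ)
    (ε : EuclideanSpace ℝ (Fin d)) :
    |Real.exp (-(β / 2) * ‖ε - Δ₁‖ ^ 2) - Real.exp (-(β / 2) * ‖ε - Δ₂‖ ^ 2)| ≤
      3 * τ * (β * ‖ε‖ + 2 * Real.sqrt β) := by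
  have hτ : 0 ≤ τ := (norm_nonneg _).trans hΔ
  have hsqrt : 0 < √β := sqrt_pos.2 hβ
  have hdiff : ‖(ε - Δ₁) - (ε - Δ₂)‖ ≤ τ := by rwa [sub_sub_sub_cancel_left, norm_sub_rev]
  have hsum : ‖ε - Δ₁‖ + ‖ε - Δ₂‖ ≤ 2 * (‖ε‖ + 1 / √β) := by
    linarith [norm_sub_le ε Δ₁, norm_sub_le ε Δ₂]
  calc _ ≤ β / 2 * ‖(ε - Δ₁) - (ε - Δ₂)‖ * (‖ε - Δ₁‖ + ‖ε - Δ₂‖) :=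
        abs_exp_neg_mul_norm_sq_sub_le (by positivity) _ _
    _ ≤ β / 2 * τ * (2 * (‖ε‖ + 1 / √β)) := by gcongr
    _ = τ * (β * ‖ε‖ + √β) := by field_simp; linear_combination (-τ) * sq_sqrt hβ.le
    _ ≤ 3 * τ * (β * ‖ε‖ + 2 * √β) := by nlinarith [mul_nonneg hτ (norm_nonneg ε)]

/-- Lipschitz bound on the Gaussian SVAM weights as a function of the error vector:
if `‖Δ¹‖, ‖Δ²‖ ≤ 1/√β` and `‖Δ¹ − Δ²‖ ≤ τ`, then for every `ε`,
`|exp(−(β/2)‖ε−Δ¹‖²) − exp(−(β/2)‖ε−Δ²‖²)| ≤ 3τ(β‖ε‖ + 2√β)`. -/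
theorem stmt13
    {d : ℕ} (β τ : ℝ) (hβ : 0 < β) (hτ : 0 ≤ τ)
    (Δ₁ Δ₂ : EuclideanSpace ℝ (Fin d))
    (hΔ₁ : ‖Δ₁‖ ≤ 1 / Real.sqrt β) (hΔ₂ : ‖Δ₂‖ ≤ 1 / Real.sqrt β)
    (hΔ : ‖Δ₁ - Δ₂‖ ≤ τ)
    (ε : EuclideanSpace ℝ (Fin d)) :
    |Real.exp (-(β / 2) * ‖ε - Δ₁‖ ^ 2) - Real.exp (-(β / 2) * ‖ε - Δ₂‖ ^ 2)| ≤
      3 * τ * (β * ‖ε‖ + 2 * Real.sqrt β) :=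
  stmt13_general β τ hβ Δ₁ Δ₂ hΔ₁ hΔ₂ hΔ ε
end

section
/- Let 0 < φ < 1 and η > 0. Then the function y ↦ f(y; η, φ) on (0, ∞) attains its unique maximum at y = (1−φ)/η. Consequently, for every β > 0, with φ̃_β = φ/(φ + β(1−φ)) and η̃_β = η·β/(φ + β(1−φ)), the density f(·; η̃_β, φ̃_β) also attains its unique maximum at y = (1−φ)/η; i.e., the variance-altering transformation of the gamma distribution is mode-preserving. -/
open Real MeasureTheory Set

/-- The gamma density in the GLM parametrization:
`f(y; η, φ) = (1/(y·Γ(1/φ)))·(yη/φ)^{1/φ}·exp(−yη/φ)` for `y > 0`. -/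
noncomputable def gammaGLMDensity (η φ y : ℝ) : ℝ :=
  1 / (y * Real.Gamma (1 / φ)) * (y * η / φ) ^ (1 / φ) * Real.exp (-(y * η / φ))

/-!
On `(0, ∞)` the density is a positive constant times `exp ((1/φ - 1) log y - (η/φ) y)`, and
`y ↦ a log y - c y` with `a, c > 0` has its unique maximum at `a / c`, by `log t < t - 1`
for `t = y / (a / c) ≠ 1`. For the gamma density `a / c = (1 - φ) / η`. The transformed
parameters satisfy `0 < φ̃_β < 1` and `(1 - φ̃_β) / η̃_β = (1 - φ) / η`, so the same applies.
-/

theorem mul_log_sub_mul_lt_of_ne {a c y : ℝ} (ha : 0 < a) (hc : 0 < c) (hy : 0 < y)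
    (hne : y ≠ a / c) :
    a * log y - c * y < a * log (a / c) - c * (a / c) := by
  have hm : 0 < a / c := div_pos ha hc
  have hratio : y / (a / c) ≠ 1 := fun h => hne ((div_eq_one_iff_eq hm.ne').mp h)
  have hlog := log_lt_sub_one_of_pos (div_pos hy hm) hratio
  have hsplit : log y = log (a / c) + log (y / (a / c)) := by
    rw [log_div hy.ne' hm.ne']; ring
  have hcy : c * y = a * (y / (a / c)) := by field_simp
  rw [hsplit, hcy, mul_div_cancel₀ a hc.ne']
  nlinarith [mul_lt_mul_of_pos_left hlog ha]

theorem gammaGLMDensity_eq_mul_exp {η φ y : ℝ} (hη : 0 ≤ η) (hφ : 0 ≤ φ) (hy : 0 < y) :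
    gammaGLMDensity η φ y =
      (η / φ) ^ (1 / φ) / Gamma (1 / φ) * exp ((1 / φ - 1) * log y - η / φ * y) := by
  rw [gammaGLMDensity, mul_div_assoc, mul_rpow hy.le (div_nonneg hη hφ), rpow_def_of_pos hy,
    show (1 / φ - 1) * log y - η / φ * y = (log y * (1 / φ) + -(y * (η / φ))) - log y by ring,
    exp_sub, exp_add, exp_log hy]
  field_simp

theorem gammaGLMDensity_lt_mode {η φ y : ℝ} (hη : 0 < η) (hφ : 0 < φ) (hφ1 : φ < 1)
    (hy : 0 < y) (hne : y ≠ (1 - φ) / η) :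
    gammaGLMDensity η φ y < gammaGLMDensity η φ ((1 - φ) / η) := by
  have hmode : 0 < (1 - φ) / η := div_pos (by linarith) hη
  have hshape : 0 < 1 / φ - 1 := by rw [sub_pos, one_lt_div hφ]; exact hφ1
  have hmode_eq : (1 - φ) / η = (1 / φ - 1) / (η / φ) := by field_simp
  have hconst : 0 < (η / φ) ^ (1 / φ) / Gamma (1 / φ) :=
    div_pos (by positivity) (Gamma_pos_of_pos (by positivity))
  rw [gammaGLMDensity_eq_mul_exp hη.le hφ.le hy, gammaGLMDensity_eq_mul_exp hη.le hφ.le hmode]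
  refine mul_lt_mul_of_pos_left (exp_lt_exp.mpr ?_) hconst
  rw [hmode_eq] at hne ⊢
  exact mul_log_sub_mul_lt_of_ne hshape (div_pos hη hφ) hy hne

/-- The gamma density attains its unique maximum on `(0,∞)` at `y = (1−φ)/η`, and the
variance-altering transformation is mode-preserving: `(1−φ̃_β)/η̃_β = (1−φ)/η` and the
variance-altered density also attains its unique maximum at `(1−φ)/η`. -/
theorem stmt16
    (φ η : ℝ) (hφ : 0 < φ) (hφ1 : φ < 1) (hη : 0 < η) :
    (∀ y ∈ Ioi (0:ℝ), y ≠ (1 - φ) / η →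
      gammaGLMDensity η φ y < gammaGLMDensity η φ ((1 - φ) / η)) ∧
    ∀ β : ℝ, 0 < β →
      (1 - φ / (φ + β * (1 - φ))) / (η * β / (φ + β * (1 - φ))) = (1 - φ) / η ∧
      ∀ y ∈ Ioi (0:ℝ), y ≠ (1 - φ) / η →
        gammaGLMDensity (η * β / (φ + β * (1 - φ))) (φ / (φ + β * (1 - φ))) y <
          gammaGLMDensity (η * β / (φ + β * (1 - φ))) (φ / (φ + β * (1 - φ)))
            ((1 - φ) / η) := by
  refine ⟨fun y hy hne => gammaGLMDensity_lt_mode hη hφ hφ1 hy hne, fun β hβ => ?_⟩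
  have hD : 0 < φ + β * (1 - φ) := by nlinarith
  have hmode : (1 - φ / (φ + β * (1 - φ))) / (η * β / (φ + β * (1 - φ))) = (1 - φ) / η := by
    field_simp
    ring
  have hφ' : φ / (φ + β * (1 - φ)) < 1 := by rw [div_lt_one hD]; nlinarith
  refine ⟨hmode, fun y hy hne => ?_⟩
  have h := gammaGLMDensity_lt_mode (by positivity) (by positivity) hφ' hy (hmode ▸ hne)
  rwa [hmode] at h
end
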